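/- Let f(z) = z^n + a_{n-1}z^{n-1} + ⋯ + a_0 be a monic complex polynomial, set c_j = n·a_{n-j}/binom(n,j) for 1 ≤ j ≤ n, and M = max_{1 ≤ j ≤ n} |c_j|^{1/j}. If z_1, …, z_n are complex numbers with f(z) = (1/n) Σ_{i=1}^n (z - z_i)^n, then |z_i| ≤ M / sin(π/(2n)) for every i. -/

import Mathlib

/-!
Reading off coefficients, `c_j = (-1)^j p_j` with `p_j = z_1^j + ⋯ + z_n^j`, so `‖p_j‖ ≤ M^j`.
Newton's identities `k e_k = ±∑_{i<k} ±e_i p_{k-i}` then give `‖e_k‖ ≤ M^k` by induction, and each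
`z_i`, a root of `∏ (X - z_i) = ∑ (-1)^k e_k X^{n-k}`, satisfies `r^n ≤ ∑_{k≥1} M^k r^{n-k}` for
`r = ‖z_i‖`, which forces `r ≤ 2M`. This suffices for `n ≥ 3`, where `sin (π/(2n)) ≤ 1/2`;
`n = 1` is immediate, and for `n = 2` the parallelogram law together with
`(z_1 - z_2)^2 = 2p_2 - p_1^2` gives `‖z_i‖ ≤ √2 M = M / sin (π/4)`.
-/

open Polynomial Finset

theorem Multiset.mul_esymm_map_eq_sum {σ R : Type*} [Fintype σ] [CommRing R] (z : σ → R) (k : ℕ) :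
    k * (univ.val.map z).esymm k = (-1) ^ (k + 1) *
      ∑ i ∈ Finset.range k, (-1) ^ i * (univ.val.map z).esymm i * ∑ m, z m ^ (k - i) := by
  have h := congrArg (MvPolynomial.aeval z) (MvPolynomial.mul_esymm_eq_sum σ R k)
  simp only [map_mul, map_natCast, map_pow, map_neg, map_one, map_sum, MvPolynomial.aeval_X,
    MvPolynomial.aeval_esymm_eq_multiset_esymm, MvPolynomial.psum] at h
  rw [h, sum_filter, Nat.sum_antidiagonal_eq_sum_range_succ
    (fun i j => if i < k then (-1) ^ i * (univ.val.map z).esymm i * ∑ m, z m ^ j else 0),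
    sum_range_succ]
  simp +contextual [sum_ite_of_true]

theorem Multiset.norm_esymm_map_le_pow {σ 𝕜 : Type*} [Fintype σ] [RCLike 𝕜] (z : σ → 𝕜) {M : ℝ}
    (hM : 0 ≤ M) {k : ℕ} (hP : ∀ j ∈ Icc 1 k, ‖∑ i, z i ^ j‖ ≤ M ^ j) :
    ‖(univ.val.map z).esymm k‖ ≤ M ^ k := by
  induction k using Nat.strong_induction_on with
  | _ k ih =>
  rcases Nat.eq_zero_or_pos k with rfl | hk
  · simp [Multiset.esymm]
  have hterm : ∀ i ∈ Finset.range k,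
      ‖(-1) ^ i * (univ.val.map z).esymm i * ∑ m, z m ^ (k - i)‖ ≤ M ^ k := by
    intro i hi
    have hik : i < k := mem_range.1 hi
    have he : ‖(univ.val.map z).esymm i‖ ≤ M ^ i :=
      ih i hik fun j hj => hP j (Icc_subset_Icc_right hik.le hj)
    have hp : ‖∑ m, z m ^ (k - i)‖ ≤ M ^ (k - i) := hP _ (mem_Icc.2 ⟨by omega, by omega⟩)
    calc _ = ‖(univ.val.map z).esymm i‖ * ‖∑ m, z m ^ (k - i)‖ := by simp
      _ ≤ M ^ i * M ^ (k - i) := by gcongr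
      _ = M ^ k := by rw [← pow_add, Nat.add_sub_cancel' hik.le]
  have hkM : k * ‖(univ.val.map z).esymm k‖ ≤ k * M ^ k :=
    calc k * ‖(univ.val.map z).esymm k‖ = ‖(k : 𝕜) * (univ.val.map z).esymm k‖ := by simp
      _ ≤ ∑ i ∈ Finset.range k, ‖(-1) ^ i * (univ.val.map z).esymm i * ∑ m, z m ^ (k - i)‖ := by
        rw [Multiset.mul_esymm_map_eq_sum, norm_mul, norm_pow, norm_neg, norm_one, one_pow, one_mul]
        exact norm_sum_le _ _
      _ ≤ k * M ^ k := by simpa using sum_le_sum hterm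
  exact le_of_mul_le_mul_left hkM (by exact_mod_cast hk)

theorem le_two_mul_of_pow_le_mul_geom_sum₂ {r M : ℝ} {n : ℕ} (hM : 0 ≤ M)
    (h : r ^ n ≤ M * ∑ i ∈ range n, M ^ i * r ^ (n - 1 - i)) : r ≤ 2 * M := by
  by_contra! hr
  -- `(r - M)` times the right-hand side telescopes to `M (r^n - M^n)`.
  have hgeom := geom_sum₂_mul M r n
  have hrn : 0 < r ^ n := pow_pos (by linarith) n
  nlinarith [pow_nonneg hM n, mul_le_mul_of_nonneg_left h (by linarith : 0 ≤ r - M)]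

theorem Multiset.norm_le_two_mul_of_norm_esymm_le {K : Type*} [NormedField K] {s : Multiset K}
    {M : ℝ} (hM : 0 ≤ M) (hE : ∀ k ∈ Icc 1 (card s), ‖s.esymm k‖ ≤ M ^ k) {x : K} (hx : x ∈ s) :
    ‖x‖ ≤ 2 * M := by
  set n := card s
  have hroot : ∑ j ∈ Finset.range (n + 1), (-1) ^ j * (s.esymm j * x ^ (n - j)) = 0 := by
    have := congrArg (eval x) (Multiset.prod_X_sub_X_eq_sum_esymm s)
    simp only [eval_multiset_prod, Multiset.map_map, Function.comp_def, eval_sub, eval_X, eval_C,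
      eval_finsetSum, eval_mul, eval_pow, eval_neg, eval_one] at this
    rw [← this]
    exact Multiset.prod_eq_zero (Multiset.mem_map.2 ⟨x, hx, sub_self x⟩)
  rw [sum_range_succ'] at hroot
  simp only [pow_zero, one_mul, Nat.sub_zero, show s.esymm 0 = 1 by simp [Multiset.esymm]] at hroot
  refine le_two_mul_of_pow_le_mul_geom_sum₂ (n := n) hM ?_
  calc ‖x‖ ^ n
        = ‖∑ j ∈ Finset.range n, (-1) ^ (j + 1) * (s.esymm (j + 1) * x ^ (n - (j + 1)))‖ := by
        rw [← norm_pow, ← neg_eq_of_add_eq_zero_right hroot, norm_neg]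
    _ ≤ ∑ j ∈ Finset.range n, M ^ (j + 1) * ‖x‖ ^ (n - (j + 1)) := by
        refine (norm_sum_le _ _).trans (sum_le_sum fun j hj => ?_)
        rw [norm_mul, norm_mul, norm_pow, norm_pow, norm_neg, norm_one, one_pow, one_mul]
        gcongr
        exact hE _ (mem_Icc.2 ⟨by omega, by simp at hj; omega⟩)
    _ = M * ∑ i ∈ Finset.range n, M ^ i * ‖x‖ ^ (n - 1 - i) := by
        rw [mul_sum]
        refine sum_congr rfl fun j _ => ?_
        rw [pow_succ, Nat.sub_sub, add_comm 1 j]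
        ring

theorem RCLike.norm_le_sqrt_two_mul_of_norm_add_le {𝕜 : Type*} [RCLike 𝕜] {a b : 𝕜} {M : ℝ}
    (hM : 0 ≤ M) (h₁ : ‖a + b‖ ≤ M) (h₂ : ‖a ^ 2 + b ^ 2‖ ≤ M ^ 2) : ‖a‖ ≤ √2 * M := by
  have hdiff : ‖a - b‖ ^ 2 ≤ 3 * M ^ 2 :=
    calc ‖a - b‖ ^ 2 = ‖2 * (a ^ 2 + b ^ 2) - (a + b) ^ 2‖ := by rw [← norm_pow]; ring_nf
      _ ≤ 2 * ‖a ^ 2 + b ^ 2‖ + ‖a + b‖ ^ 2 := by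
        refine (norm_sub_le _ _).trans ?_
        rw [norm_mul, norm_pow, RCLike.norm_two]
      _ ≤ 3 * M ^ 2 := by nlinarith [norm_nonneg (a + b)]
  have hpar := parallelogram_law_with_norm 𝕜 (a + b) (a - b)
  rw [add_add_sub_cancel, add_sub_sub_cancel, ← two_mul, ← two_mul, norm_mul, norm_mul,
    RCLike.norm_two] at hpar
  rw [← sq_le_sq₀ (norm_nonneg a) (by positivity), mul_pow, Real.sq_sqrt zero_le_two]
  nlinarith [norm_nonneg (a + b), norm_nonneg b]

theorem two_mul_le_div_sin_pi_div {n : ℕ} (hn : 3 ≤ n) {M : ℝ} (hM : 0 ≤ M) :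
    2 * M ≤ M / Real.sin (Real.pi / (2 * n)) := by
  have hn' : (3 : ℝ) ≤ n := by exact_mod_cast hn
  have hpos : 0 < Real.sin (Real.pi / (2 * n)) :=
    Real.sin_pos_of_pos_of_lt_pi (by positivity)
      (div_lt_self Real.pi_pos (by linarith))
  have hle : Real.sin (Real.pi / (2 * n)) ≤ 1 / 2 := by
    rw [← Real.sin_pi_div_six]
    apply Real.sin_le_sin_of_le_of_le_pi_div_two
    · linarith [Real.pi_pos, show 0 ≤ Real.pi / (2 * n) by positivity]
    · linarith [Real.pi_pos]
    · gcongr; linarith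
  rw [le_div_iff₀ hpos]
  nlinarith

theorem coeff_sum_X_sub_C_pow {ι R : Type*} [CommRing R] (s : Finset ι) (z : ι → R) {n j : ℕ}
    (hj : j ≤ n) :
    (∑ i ∈ s, (X - C (z i)) ^ n).coeff (n - j) = (-1) ^ j * n.choose j * ∑ i ∈ s, z i ^ j := by
  rw [finsetSum_coeff, mul_sum]
  refine sum_congr rfl fun i _ => ?_
  rw [sub_eq_add_neg, ← map_neg, coeff_X_add_C_pow, Nat.sub_sub_self hj, Nat.choose_symm hj,
    neg_pow]
  ring

theorem norm_le_div_sin_of_norm_powerSum_le {𝕜 : Type*} [RCLike 𝕜] {n : ℕ} (z : Fin n → 𝕜)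
    {M : ℝ} (hM : 0 ≤ M) (hP : ∀ j ∈ Icc 1 n, ‖∑ i, z i ^ j‖ ≤ M ^ j) (i : Fin n) :
    ‖z i‖ ≤ M / Real.sin (Real.pi / (2 * n)) := by
  match n, z, hP, i with
  | 1, z, hP, 0 => simpa using hP 1 (by simp)
  | 2, z, hP, i =>
    have h₁ := hP 1 (by simp)
    have h₂ := hP 2 (by simp)
    simp only [Fin.sum_univ_two, pow_one] at h₁ h₂
    have hsin : M / Real.sin (Real.pi / (2 * (2 : ℕ))) = √2 * M := by
      rw [show 2 * ((2 : ℕ) : ℝ) = 4 by norm_num, Real.sin_pi_div_four]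
      field_simp
      rw [Real.sq_sqrt zero_le_two]
    rw [hsin]
    fin_cases i
    · exact RCLike.norm_le_sqrt_two_mul_of_norm_add_le hM h₁ h₂
    · exact RCLike.norm_le_sqrt_two_mul_of_norm_add_le hM (by rwa [add_comm]) (by rwa [add_comm])
  | n + 3, z, hP, i =>
    have hE : ∀ k ∈ Icc 1 (Multiset.card (univ.val.map z)), ‖(univ.val.map z).esymm k‖ ≤ M ^ k :=
      fun k hk => Multiset.norm_esymm_map_le_pow z hM fun j hj =>
        hP j (Icc_subset_Icc_right (by simpa using (mem_Icc.1 hk).2) hj)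
    exact (Multiset.norm_le_two_mul_of_norm_esymm_le hM hE
      (Multiset.mem_map_of_mem z (mem_univ i))).trans (two_mul_le_div_sin_pi_div (by omega) hM)

theorem average_representation_bound_general (n : ℕ)
    (f : Polynomial ℂ)
    (c : Fin n → ℂ)
    (hc : ∀ j : Fin n, c j = (n : ℂ) * f.coeff (n - (j.1 + 1)) / (n.choose (j.1 + 1)))
    (M : ℝ)
    (hM : IsGreatest (Set.range fun j : Fin n =>
      ‖c j‖ ^ ((1 : ℝ) / (j.1 + 1))) M)
    (z : Fin n → ℂ)
    (hz : f = Polynomial.C ((n : ℂ)⁻¹) * ∑ i, (Polynomial.X - Polynomial.C (z i)) ^ n) :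
    ∀ i, ‖z i‖ ≤ M / Real.sin (Real.pi / (2 * n)) := by
  have hM₀ : 0 ≤ M := by
    obtain ⟨j, hj⟩ := hM.1
    exact hj ▸ by positivity
  have hP : ∀ j ∈ Icc 1 n, ‖∑ i, z i ^ j‖ ≤ M ^ j := by
    intro j hj
    obtain ⟨k, rfl⟩ : ∃ k, j = k + 1 := ⟨j - 1, by grind⟩
    have hkn : k < n := by grind
    have hck : c ⟨k, hkn⟩ = (-1) ^ (k + 1) * ∑ i, z i ^ (k + 1) := by
      have : (n : ℂ) ≠ 0 := by exact_mod_cast (show n ≠ 0 by omega)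
      have : (n.choose (k + 1) : ℂ) ≠ 0 := by exact_mod_cast (Nat.choose_pos hkn).ne'
      rw [hc, hz, coeff_C_mul, coeff_sum_X_sub_C_pow _ _ hkn]
      field_simp
    have hcM : ‖c ⟨k, hkn⟩‖ ^ ((1 : ℝ) / (k + 1)) ≤ M := hM.2 ⟨⟨k, hkn⟩, rfl⟩
    rwa [one_div, ← Nat.cast_succ, Real.rpow_inv_le_iff_of_pos (norm_nonneg _) hM₀ (by positivity),
      Real.rpow_natCast, hck, norm_mul, norm_pow, norm_neg, norm_one, one_pow, one_mul] at hcM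
  exact norm_le_div_sin_of_norm_powerSum_le z hM₀ hP

/-- If the monic degree-n polynomial f is represented as (1/n) Σ (X - z_i)^n, then
|z_i| ≤ M / sin(π/(2n)), where M = max_{1≤j≤n} |c_j|^{1/j} and
c_j = n·a_{n-j}/binom(n,j). -/
theorem average_representation_bound (n : ℕ) (hn : 1 ≤ n)
    (f : Polynomial ℂ) (hf : f.Monic) (hdeg : f.natDegree = n)
    (c : Fin n → ℂ)
    (hc : ∀ j : Fin n, c j = (n : ℂ) * f.coeff (n - (j.1 + 1)) / (n.choose (j.1 + 1)))
    (M : ℝ)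
    (hM : IsGreatest (Set.range fun j : Fin n =>
      ‖c j‖ ^ ((1 : ℝ) / (j.1 + 1))) M)
    (z : Fin n → ℂ)
    (hz : f = Polynomial.C ((n : ℂ)⁻¹) * ∑ i, (Polynomial.X - Polynomial.C (z i)) ^ n) :
    ∀ i, ‖z i‖ ≤ M / Real.sin (Real.pi / (2 * n)) :=
  average_representation_bound_general n f c hc M hM z hz
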